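/- arXiv:math/9904038 — 8 statements merged into one kernel-verified Lean document; each statement's English description precedes it below -/
import Mathlib

section
/- Let G be a simplicial group and n ≥ 1. Every element x ∈ G_n can be written in the form x = y · ∏_{α ∈ S(n), α ≠ ∅} s_α(x_α), where y ∈ NG_n = ∩_{i=0}^{n-1} Ker(d_i^n), each x_α ∈ NG_{n−#α}, s_α = s_{i_l}⋯s_{i_1} for α = (i_l,…,i_1), and the product is taken in the lexicographic order on S(n). -/
/-- A simplicial group: groups `G n` with face maps `d n i : G (n+1) →* G n`
and degeneracies `s n i : G n →* G (n+1)` satisfying the simplicial identities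
(asserted in the meaningful index ranges). -/
structure SGrp where
  G : ℕ → Type
  grp : ∀ n, Group (G n)
  d : (n : ℕ) → ℕ → (G (n+1) →* G n)
  s : (n : ℕ) → ℕ → (G n →* G (n+1))
  dd : ∀ n i j, i < j → j ≤ n + 2 → ∀ x,
    d n i (d (n+1) j x) = d n (j-1) (d (n+1) i x)
  ds_lt : ∀ n i j, i < j → j ≤ n + 1 → ∀ x,
    d (n+1) i (s (n+1) j x) = s n (j-1) (d n i x)
  ds_eq : ∀ n j, j ≤ n → ∀ x, d n j (s n j x) = x
  ds_succ : ∀ n j, j ≤ n → ∀ x, d n (j+1) (s n j x) = x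
  ds_gt : ∀ n i j, j + 1 < i → i ≤ n + 2 → ∀ x,
    d (n+1) i (s (n+1) j x) = s n j (d n (i-1) x)
  ss : ∀ n i j, i ≤ j → j ≤ n → ∀ x,
    s (n+1) i (s n j x) = s (n+1) (j+1) (s n i x)

attribute [instance] SGrp.grp

/-- Moore complex: `NG 0 = G 0`, `NG (n+1) = ⋂_{i ≤ n} ker (d_i)`. -/
def SGrp.NG (X : SGrp) : (n : ℕ) → Subgroup (X.G n)
  | 0 => ⊤
  | (n+1) => ⨅ i ∈ Finset.range (n+1), (X.d n i).ker

/-- Transport along an equality of dimensions. -/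
def SGrp.castHom (X : SGrp) {a b : ℕ} (h : a = b) : X.G a →* X.G b where
  toFun x := h ▸ x
  map_one' := by subst h; rfl
  map_mul' x y := by subst h; rfl

/-- Composite degeneracy `s_α = s_{i_l} ⋯ s_{i_1}` for `α = [i_l, …, i_1]`
(head applied last). -/
def SGrp.sComp (X : SGrp) : (m : ℕ) → (α : List ℕ) → (X.G m →* X.G (m + α.length))
  | _, [] => MonoidHom.id _
  | m, i :: rest => (X.s (m + rest.length) i).comp (X.sComp m rest)

/-- `s_α : G_{n-#α} →* G_n` for `α ∈ S(n)` (the trivial hom if lengths mismatch). -/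
def SGrp.sMapN (X : SGrp) (n : ℕ) (α : List ℕ) : X.G (n - α.length) →* X.G n :=
  if h : n - α.length + α.length = n then
    (X.castHom h).comp (X.sComp (n - α.length) α) else 1

/-- `p_j(z) = z ⬝ (s_j d_j z)⁻¹` on `G (n+1)`. -/
def SGrp.p (X : SGrp) (n j : ℕ) (z : X.G (n+1)) : X.G (n+1) :=
  z * (X.s n j (X.d n j z))⁻¹

/-- `pComp n j = p_j ∘ ⋯ ∘ p_0` on `G (n+1)`. -/
def SGrp.pComp (X : SGrp) (n : ℕ) : ℕ → X.G (n+1) → X.G (n+1)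
  | 0 => X.p n 0
  | (j+1) => fun z => X.p n (j+1) (X.pComp n j z)

/-- `pComp1 n l = p_l ∘ ⋯ ∘ p_1` on `G (n+1)` (identity for `l = 0`). -/
def SGrp.pComp1 (X : SGrp) (n : ℕ) : ℕ → X.G (n+1) → X.G (n+1)
  | 0 => id
  | (j+1) => fun z => X.p n (j+1) (X.pComp1 n j z)

/-- The ordering of `S(n)` from the paper: `α < β` iff comparing from the
smallest indices (the reversed lists), either the first difference has the
index of `α` larger, or `α`'s indices (from the small end) form a proper
prefix of `β`'s. -/
def Slt (α β : List ℕ) : Prop := List.Lex (· > ·) α.reverse β.reverse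

/-- `α` represents a nonidentity element of `S(N)`: a nonempty strictly
decreasing tuple of indices `< N`. -/
def SIdx (N : ℕ) (α : List ℕ) : Prop :=
  α ≠ [] ∧ α.Chain' (· > ·) ∧ α.length ≤ N ∧ ∀ i ∈ α, i < N


namespace SGrp
variable (X : SGrp)

lemma castHom_castHom {a b c : ℕ} (h1 : a = b) (h2 : b = c) (x : X.G a) :
    X.castHom h2 (X.castHom h1 x) = X.castHom (h1.trans h2) x := by
  subst h1; subst h2; rfl

lemma castHom_rfl {a : ℕ} (h : a = a) (x : X.G a) : X.castHom h x = x := rfl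

lemma s_cast {a b : ℕ} (h : a = b) (i : ℕ) (x : X.G a) :
    X.s b i (X.castHom h x) = X.castHom (by rw [h]) (X.s a i x) := by
  subst h; rfl

lemma sComp_cast {a b : ℕ} (h : a = b) (α : List ℕ) (x : X.G a) :
    X.sComp b α (X.castHom h x) = X.castHom (by rw [h]) (X.sComp a α x) := by
  subst h; rfl

lemma castHom_mem_NG {a b : ℕ} (h : a = b) {x : X.G a} (hx : x ∈ X.NG a) :
    X.castHom h x ∈ X.NG b := by
  subst h; exact hx

lemma sComp_append_single (k : ℕ) : ∀ (β : List ℕ) (m : ℕ) (x : X.G m),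
    X.sComp m (β ++ [k]) x
      = X.castHom (by simp; omega) (X.sComp (m+1) β (X.s m k x)) := by
  intro β
  induction β with
  | nil => intro m x; rfl
  | cons b γ ih =>
    intro m x
    show X.s (m + (γ ++ [k]).length) b (X.sComp m (γ ++ [k]) x) = _
    rw [ih m x, X.s_cast]
    rfl

lemma s_comm_comp (k : ℕ) : ∀ (α : List ℕ) (m : ℕ), α.Pairwise (· > ·) →
    (∀ a ∈ α, k ≤ a ∧ a < m + α.length) → ∀ x : X.G m,
    X.s (m + α.length) k (X.sComp m α x)
      = X.castHom (by simp; omega) (X.sComp (m+1) (α.map (· + 1)) (X.s m k x)) := by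
  intro α
  induction α with
  | nil => intro m _ _ x; rfl
  | cons a γ ih =>
    intro m hp hb x
    have ha := hb a (List.mem_cons_self)
    have hss := X.ss (m + γ.length) k a ha.1 (by have := ha.2; simp at this ⊢; omega)
      (X.sComp m γ x)
    show X.s (m + γ.length + 1) k (X.s (m + γ.length) a (X.sComp m γ x)) = _
    rw [hss]
    rw [ih m hp.of_cons (fun i hi => ⟨(hb i (List.mem_cons_of_mem _ hi)).1,
      lt_of_lt_of_le ((List.pairwise_cons.mp hp).1 i hi) (by have := ha.2; simp at this ⊢; omega)⟩) x]
    rw [X.s_cast]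
    rfl

end SGrp

namespace SGrp
variable (X : SGrp)

/-- A "pack": a source dimension `q`, an index list `α`, and a value in `G q`. -/
def term (m : ℕ) (p : Σ q : ℕ, List ℕ × X.G q) : X.G m :=
  if h : p.1 + p.2.1.length = m then X.castHom h (X.sComp p.1 p.2.1 p.2.2) else 1

lemma term_single (n k : ℕ) (v : X.G n) :
    X.term (n+1) ⟨n, ([k], v)⟩ = X.s n k v := by
  unfold term
  rw [dif_pos (by simp)]
  rfl

lemma term_bump (n k : ℕ) (q : ℕ) (α : List ℕ) (v : X.G q)
    (hdim : q + α.length = n) (hch : α.Pairwise (· > ·))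
    (hent : ∀ a ∈ α, k ≤ a ∧ a < n) :
    X.term (n+1) ⟨q, (α.map (· + 1) ++ [k], v)⟩ = X.s n k (X.term n ⟨q, (α, v)⟩) := by
  unfold term
  rw [dif_pos hdim, dif_pos (by simp; omega)]
  rw [X.s_cast hdim]
  rw [X.s_comm_comp k α q hch (fun a ha => ⟨(hent a ha).1, hdim ▸ (hent a ha).2⟩)]
  rw [X.castHom_castHom]
  rw [X.sComp_append_single k (α.map (· + 1)) q v]
  rw [X.castHom_castHom]

end SGrp

section lexs
variable {r : ℕ → ℕ → Prop}

lemma lex_trans (hr : ∀ {a b c}, r a b → r b c → r a c) :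
    ∀ {a b c : List ℕ}, List.Lex r a b → List.Lex r b c → List.Lex r a c := by
  intro a b c h1
  induction h1 generalizing c with
  | nil => intro h2; cases h2 <;> exact List.Lex.nil
  | @cons x l₁ l₂ h ih =>
    intro h2
    cases h2 with
    | cons h' => exact List.Lex.cons (ih h')
    | rel h' => exact List.Lex.rel h'
  | @rel x l₁ y l₂ h =>
    intro h2
    cases h2 with
    | cons _ => exact List.Lex.rel h
    | rel h' => exact List.Lex.rel (hr h h')

lemma lex_irrefl (hr : ∀ a, ¬ r a a) : ∀ l : List ℕ, ¬ List.Lex r l l := by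
  intro l h
  induction l with
  | nil => cases h
  | cons a t ih => cases h with
    | cons h' => exact ih h'
    | rel h' => exact hr a h'

lemma lex_map {f : ℕ → ℕ} (hf : ∀ x y, r x y → r (f x) (f y)) :
    ∀ {a b : List ℕ}, List.Lex r a b → List.Lex r (a.map f) (b.map f) := by
  intro a b h
  induction h with
  | nil => exact List.Lex.nil
  | cons _ ih => exact List.Lex.cons ih
  | rel h' => exact List.Lex.rel (hf _ _ h')

end lexs

lemma slt_trans {a b c : List ℕ} (h1 : Slt a b) (h2 : Slt b c) : Slt a c := by
  unfold Slt at *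
  exact lex_trans (r := (· > ·)) (fun hab hbc => lt_trans hbc hab) h1 h2

lemma slt_irrefl (l : List ℕ) : ¬ Slt l l := by
  unfold Slt
  exact lex_irrefl (r := (· > ·)) (fun a h => lt_irrefl a h) _

lemma slt_asymm {a b : List ℕ} (h1 : Slt a b) (h2 : Slt b a) : False :=
  slt_irrefl a (slt_trans h1 h2)

lemma slt_ne {a b : List ℕ} (h : Slt a b) : a ≠ b := by
  rintro rfl; exact slt_irrefl a h

lemma rev_map_succ (α : List ℕ) :
    (α.map (· + 1)).reverse = α.reverse.map (· + 1) := by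
  rw [List.map_reverse]

lemma rev_bump (α : List ℕ) (k : ℕ) :
    (α.map (· + 1) ++ [k]).reverse = k :: α.reverse.map (· + 1) := by
  simp

lemma slt_map_succ {α β : List ℕ} (h : Slt α β) : Slt (α.map (· + 1)) (β.map (· + 1)) := by
  unfold Slt
  rw [rev_map_succ, rev_map_succ]
  exact lex_map (fun x y hxy => by omega) h

lemma slt_bump {α β : List ℕ} (k : ℕ) (h : Slt α β) :
    Slt (α.map (· + 1) ++ [k]) (β.map (· + 1) ++ [k]) := by
  unfold Slt
  rw [rev_bump, rev_bump]
  exact List.Lex.cons (lex_map (fun x y hxy => by omega) h)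

lemma slt_k_bump {α : List ℕ} (k : ℕ) (h : α ≠ []) : Slt [k] (α.map (· + 1) ++ [k]) := by
  unfold Slt
  rw [rev_bump]
  simp only [List.reverse_cons, List.reverse_nil, List.nil_append]
  obtain ⟨a, t, ht⟩ : ∃ a t, α.reverse = a :: t := by
    rcases hr : α.reverse with _ | ⟨a, t⟩
    · exact absurd (by simpa using congrArg List.reverse hr) h
    · exact ⟨a, t, rfl⟩
  rw [ht]
  exact List.Lex.cons List.Lex.nil

/-- If the smallest entry (head of reverse) of `β` is `> k` and `γ`'s reverse
starts with `k`, then `β < γ`. -/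
lemma slt_of_rev {β γ : List ℕ} {b k : ℕ} {tb tc : List ℕ}
    (hb : β.reverse = b :: tb) (hc : γ.reverse = k :: tc) (hbk : k < b) : Slt β γ := by
  unfold Slt; rw [hb, hc]; exact List.Lex.rel hbk

lemma declen : ∀ (l : List ℕ) (M : ℕ), l.Pairwise (· > ·) → (∀ i ∈ l, i < M) → l.length ≤ M := by
  intro l
  induction l with
  | nil => intro M _ _; simp
  | cons a t ih =>
    intro M hp hm
    have ht : t.length ≤ a := ih a (hp.of_cons) (fun i hi => (List.pairwise_cons.mp hp).1 i hi)
    have : a < M := hm a (List.mem_cons_self)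
    simp only [List.length_cons]
    omega

lemma pw_sublist : ∀ (l₂ l₁ : List (List ℕ)), l₁.Pairwise Slt → l₂.Pairwise Slt →
    (∀ a ∈ l₁, a ∈ l₂) → l₁.Sublist l₂ := by
  intro l₂
  induction l₂ with
  | nil =>
    intro l₁ _ _ hsub
    rcases l₁ with _ | ⟨a, t⟩
    · simp
    · exact absurd (hsub a (List.mem_cons_self)) List.not_mem_nil
  | cons b t₂ ih =>
    intro l₁ h1 h2 hsub
    rcases l₁ with _ | ⟨a, t₁⟩
    · simp
    · by_cases hab : a = b
      · subst hab
        refine List.Sublist.cons₂ a (ih t₁ h1.of_cons h2.of_cons ?_)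
        intro x hx
        have hx2 := hsub x (List.mem_cons_of_mem _ hx)
        rcases List.mem_cons.mp hx2 with rfl | hx2
        · exact absurd ((List.pairwise_cons.mp h1).1 x hx) (slt_irrefl x)
        · exact hx2
      · refine List.Sublist.cons b (ih (a :: t₁) h1 h2.of_cons ?_)
        intro x hx
        have hx2 := hsub x hx
        rcases List.mem_cons.mp hx2 with hxb | hx2
        · exfalso
          have ha : a ∈ b :: t₂ := hsub a (List.mem_cons_self)
          rcases List.mem_cons.mp hx with hxa | hx
          · exact hab (hxa.symm.trans hxb)
          · have h1ax : Slt a x := (List.pairwise_cons.mp h1).1 x hx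
            rcases List.mem_cons.mp ha with hb | ha
            · exact hab hb
            · have h2a : Slt x a := by rw [hxb]; exact (List.pairwise_cons.mp h2).1 a ha
              exact slt_asymm h1ax h2a
        · exact hx2

lemma prod_pad {G : Type*} [Monoid G] (F : List ℕ → G) :
    ∀ {l₁ l₂ : List (List ℕ)}, l₁.Sublist l₂ → l₂.Nodup →
    (∀ a ∈ l₂, a ∉ l₁ → F a = 1) → (l₂.map F).prod = (l₁.map F).prod := by
  intro l₁ l₂ h
  induction h with
  | slnil => intro _ _; rfl
  | @cons s₁ s₂ a h ih =>
    intro nd h1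
    have ha1 : F a = 1 := by
      refine h1 a (List.mem_cons_self) (fun hal => ?_)
      exact (List.nodup_cons.mp nd).1 (h.subset hal)
    simp only [List.map_cons, List.prod_cons, ha1, one_mul]
    exact ih (List.nodup_cons.mp nd).2 (fun x hx hx1 => h1 x (List.mem_cons_of_mem _ hx) hx1)
  | @cons_cons s₁ s₂ a h ih =>
    intro nd h1
    simp only [List.map_cons, List.prod_cons]
    have : (s₂.map F).prod = (s₁.map F).prod := by
      refine ih (List.nodup_cons.mp nd).2 (fun x hx hx1 => ?_)
      refine h1 x (List.mem_cons_of_mem _ hx) (fun hc => ?_)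
      rcases List.mem_cons.mp hc with rfl | hc
      · exact (List.nodup_cons.mp nd).1 hx
      · exact hx1 hc
    rw [this]

instance : IsTrans ℕ (· > ·) := ⟨fun _ _ _ h1 h2 => lt_trans h2 h1⟩

lemma sidx_pairwise {N : ℕ} {α : List ℕ} (h : SIdx N α) : α.Pairwise (· > ·) :=
  List.isChain_iff_pairwise.mp h.2.1

lemma sidx_map_succ {N : ℕ} {β : List ℕ} (h : SIdx N β) : SIdx (N+1) (β.map (· + 1)) := by
  obtain ⟨hne, hch, hlen, hmem⟩ := h
  refine ⟨by simpa using hne, ?_, by simpa using hlen.trans (Nat.le_succ N), ?_⟩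
  · exact (List.pairwise_map.mpr ((List.isChain_iff_pairwise.mp hch).imp (fun h => by omega))).isChain
  · intro i hi
    obtain ⟨b, hb, rfl⟩ := List.mem_map.mp hi
    have := hmem b hb; omega

lemma sidx_bump {N k : ℕ} {α : List ℕ} (h : SIdx N α) (hkN : k ≤ N)
    (hka : ∀ a ∈ α, k ≤ a) : SIdx (N+1) (α.map (· + 1) ++ [k]) := by
  obtain ⟨hne, hch, hlen, hmem⟩ := h
  refine ⟨by simp, ?_, by simp; omega, ?_⟩
  · refine List.Pairwise.isChain (List.pairwise_append.mpr ⟨?_, by simp, ?_⟩)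
    · exact List.pairwise_map.mpr ((List.isChain_iff_pairwise.mp hch).imp (fun h => by omega))
    · intro x hx b hb
      obtain ⟨a, ha, rfl⟩ := List.mem_map.mp hx
      have := hka a ha
      simp at hb; omega
  · intro i hi
    rcases List.mem_append.mp hi with hi | hi
    · obtain ⟨a, ha, rfl⟩ := List.mem_map.mp hi
      have := hmem a ha; omega
    · simp at hi; omega

lemma sidx_single {N k : ℕ} (h : k < N) : SIdx N [k] :=
  ⟨by simp, List.isChain_singleton k, by simp; omega, by simpa using h⟩

lemma sidx_cases {N : ℕ} {α : List ℕ} (h : SIdx (N+1) α) :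
    (∃ β, SIdx N β ∧ α = β.map (· + 1)) ∨ α = [0] ∨
    (∃ β, SIdx N β ∧ α = β.map (· + 1) ++ [0]) := by
  obtain ⟨hne, hch, hlen, hmem⟩ := h
  have hpw : α.Pairwise (· > ·) := List.isChain_iff_pairwise.mp hch
  by_cases h0 : 0 ∈ α
  · rcases List.eq_nil_or_concat α with rfl | ⟨l, b, hlb⟩
    · exact absurd rfl hne
    rw [List.concat_eq_append] at hlb
    subst hlb
    have hb0 : b = 0 := by
      rcases List.mem_append.mp h0 with h0 | h0
      · have := (List.pairwise_append.mp hpw).2.2 0 h0 b (by simp)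
        omega
      · simp at h0; omega
    subst hb0
    rcases l with _ | ⟨c, t⟩
    · exact Or.inr (Or.inl rfl)
    · set l := c :: t with hl
      right; right
      have hpos : ∀ x ∈ l, 1 ≤ x := by
        intro x hx
        have := (List.pairwise_append.mp hpw).2.2 x hx 0 (by simp)
        omega
      refine ⟨l.map (· - 1), ⟨?_, ?_, ?_, ?_⟩, ?_⟩
      · simp [hl]
      · refine List.Pairwise.isChain (List.pairwise_map.mpr ?_)
        refine ((List.pairwise_append.mp hpw).1).imp_of_mem (fun hx hy hxy => ?_)
        have := hpos _ hx; have := hpos _ hy; omega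
      · have : l.length + 1 ≤ N + 1 := by simpa using hlen
        simp; omega
      · intro i hi
        obtain ⟨a, ha, rfl⟩ := List.mem_map.mp hi
        have := hmem a (List.mem_append.mpr (Or.inl ha))
        have := hpos a ha
        omega
      · congr 1
        rw [List.map_map]
        refine ((List.map_congr_left (fun a ha => ?_)).trans (List.map_id l)).symm
        have := hpos a ha
        simp; omega
  · left
    have hpos : ∀ x ∈ α, 1 ≤ x := by
      intro x hx
      rcases Nat.eq_zero_or_pos x with rfl | h
      · exact absurd hx h0
      · omega
    have hpwβ : (α.map (· - 1)).Pairwise (· > ·) := by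
      refine List.pairwise_map.mpr (hpw.imp_of_mem (fun hx hy hxy => ?_))
      have := hpos _ hx; have := hpos _ hy; omega
    have hentβ : ∀ i ∈ α.map (· - 1), i < N := by
      intro i hi
      obtain ⟨a, ha, rfl⟩ := List.mem_map.mp hi
      have := hmem a ha; have := hpos a ha; omega
    refine ⟨α.map (· - 1), ⟨by simpa using hne, hpwβ.isChain, ?_, hentβ⟩, ?_⟩
    · exact declen _ N hpwβ hentβ
    · rw [List.map_map]
      refine ((List.map_congr_left (fun a ha => ?_)).trans (List.map_id α)).symm
      have := hpos a ha
      simp; omega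

/-- The full, `Slt`-sorted list of elements of `S(N)`. -/
def Lfull : ℕ → List (List ℕ)
  | 0 => []
  | (N+1) => (Lfull N).map (List.map (· + 1)) ++
      [0] :: (Lfull N).map (fun α => α.map (· + 1) ++ [0])

lemma Lfull_mem : ∀ N α, α ∈ Lfull N ↔ SIdx N α := by
  intro N
  induction N with
  | zero =>
    intro α
    simp only [Lfull, List.not_mem_nil, false_iff]
    rintro ⟨hne, _, _, hmem⟩
    rcases α with _ | ⟨a, t⟩
    · exact hne rfl
    · exact absurd (hmem a (by simp)) (by omega)
  | succ N ih =>
    intro α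
    constructor
    · intro hα
      rcases List.mem_append.mp hα with hα | hα
      · obtain ⟨β, hβ, rfl⟩ := List.mem_map.mp hα
        exact sidx_map_succ ((ih β).mp hβ)
      · rcases List.mem_cons.mp hα with rfl | hα
        · exact sidx_single (by omega)
        · obtain ⟨β, hβ, rfl⟩ := List.mem_map.mp hα
          exact sidx_bump ((ih β).mp hβ) (by omega) (by omega)
    · intro hα
      rcases sidx_cases hα with ⟨β, hβ, rfl⟩ | rfl | ⟨β, hβ, rfl⟩
      · exact List.mem_append.mpr (Or.inl (List.mem_map.mpr ⟨β, (ih β).mpr hβ, rfl⟩))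
      · exact List.mem_append.mpr (Or.inr (by simp))
      · exact List.mem_append.mpr (Or.inr (List.mem_cons_of_mem _
          (List.mem_map.mpr ⟨β, (ih β).mpr hβ, rfl⟩)))

lemma rev_ne_nil {α : List ℕ} (h : α ≠ []) : ∃ a t, α.reverse = a :: t := by
  rcases hr : α.reverse with _ | ⟨a, t⟩
  · exact absurd (by simpa using congrArg List.reverse hr) h
  · exact ⟨a, t, rfl⟩

lemma Lfull_pairwise : ∀ N, (Lfull N).Pairwise Slt := by
  intro N
  induction N with
  | zero => simp [Lfull]
  | succ N ih =>
    refine List.pairwise_append.mpr ⟨?_, ?_, ?_⟩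
    · exact List.pairwise_map.mpr (ih.imp (fun h => slt_map_succ h))
    · refine List.pairwise_cons.mpr ⟨?_, ?_⟩
      · intro γ hγ
        obtain ⟨β, hβ, rfl⟩ := List.mem_map.mp hγ
        exact slt_k_bump 0 ((Lfull_mem N β).mp hβ).1
      · exact List.pairwise_map.mpr (ih.imp (fun h => slt_bump 0 h))
    · intro x hx γ hγ
      obtain ⟨β, hβ, rfl⟩ := List.mem_map.mp hx
      have hβS := (Lfull_mem N β).mp hβ
      obtain ⟨a, t, hat⟩ := rev_ne_nil hβS.1
      have hx' : (β.map (· + 1)).reverse = (a+1) :: t.map (· + 1) := by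
        rw [← List.map_reverse, hat]; rfl
      rcases List.mem_cons.mp hγ with rfl | hγ
      · exact slt_of_rev hx' (by rfl) (by omega)
      · obtain ⟨δ, hδ, rfl⟩ := List.mem_map.mp hγ
        exact slt_of_rev hx' (rev_bump δ 0) (by omega)

namespace SGrp
variable (X : SGrp)

lemma sMapN_one (n : ℕ) (α : List ℕ) : X.sMapN n α 1 = 1 := by
  unfold sMapN
  split
  · exact map_one _
  · rfl

/-- Build an `f`-function from a list of (index, value) pairs. -/
def fOf (M : ℕ) : List ((α : List ℕ) × X.G (M - α.length)) → (α : List ℕ) → X.G (M - α.length)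
  | [], _ => 1
  | (p :: D), α => if h : α = p.1 then X.castHom (by rw [h]) p.2 else fOf M D α

lemma fOf_not_mem (M : ℕ) : ∀ (D : List ((α : List ℕ) × X.G (M - α.length))) (α : List ℕ),
    α ∉ D.map Sigma.fst → X.fOf M D α = 1 := by
  intro D
  induction D with
  | nil => intro α _; rfl
  | cons p D ih =>
    intro α hα
    simp only [fOf]
    rw [dif_neg (by simp at hα; exact fun h => hα.1 h)]
    exact ih α (by simp at hα ⊢; exact hα.2)

lemma fOf_mem_NG (M : ℕ) : ∀ (D : List ((α : List ℕ) × X.G (M - α.length))),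
    (∀ p ∈ D, p.2 ∈ X.NG (M - p.1.length)) → ∀ α, X.fOf M D α ∈ X.NG (M - α.length) := by
  intro D
  induction D with
  | nil => intro _ α; exact Subgroup.one_mem _
  | cons p D ih =>
    intro hD α
    simp only [fOf]
    split
    · exact X.castHom_mem_NG _ (hD p (List.mem_cons_self))
    · exact ih (fun q hq => hD q (List.mem_cons_of_mem _ hq)) α

lemma fOf_mem (M : ℕ) : ∀ (D : List ((α : List ℕ) × X.G (M - α.length))),
    (D.map Sigma.fst).Nodup → ∀ p ∈ D, X.fOf M D p.1 = p.2 := by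
  intro D
  induction D with
  | nil => intro _ p hp; exact absurd hp List.not_mem_nil
  | cons q D ih =>
    intro nd p hp
    rcases List.mem_cons.mp hp with rfl | hp
    · simp only [fOf]
      rw [dif_pos trivial]
      rfl
    · simp only [fOf]
      have hne : p.1 ≠ q.1 := by
        intro h
        have : q.1 ∉ D.map Sigma.fst := (List.nodup_cons.mp (by simpa using nd)).1
        exact this (h ▸ List.mem_map.mpr ⟨p, hp, rfl⟩)
      rw [dif_neg hne]
      exact ih (List.nodup_cons.mp (by simpa using nd)).2 p hp

/-- Conversion from a pack to a sigma pair over the fixed top dimension `M`. -/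
def toSig (M : ℕ) (p : Σ q : ℕ, List ℕ × X.G q) : (α : List ℕ) × X.G (M - α.length) :=
  ⟨p.2.1, if h : p.1 = M - p.2.1.length then X.castHom h p.2.2 else 1⟩

lemma term_toSig (M : ℕ) (p : Σ q : ℕ, List ℕ × X.G q) (hdim : p.1 + p.2.1.length = M) :
    X.sMapN M p.2.1 (X.toSig M p).2 = X.term M p := by
  obtain ⟨q, α, v⟩ := p
  simp only [toSig, term] at *
  rw [dif_pos (by omega : q = M - α.length), dif_pos hdim]
  unfold sMapN
  rw [dif_pos (by omega : M - α.length + α.length = M)]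
  show X.castHom _ (X.sComp (M - α.length) α (X.castHom _ v)) = _
  rw [X.sComp_cast, X.castHom_castHom]

end SGrp

/-- `x` is killed by the faces `d_i` for `i < k`. -/
def SGrp.KerLow (X : SGrp) : (m : ℕ) → ℕ → X.G m → Prop
  | 0, _, _ => True
  | (n+1), k, x => ∀ i < k, X.d n i x = 1

lemma SGrp.mem_NG_succ (X : SGrp) (n : ℕ) (x : X.G (n+1)) :
    x ∈ X.NG (n+1) ↔ ∀ i < n+1, X.d n i x = 1 := by
  show x ∈ ⨅ i ∈ Finset.range (n+1), (X.d n i).ker ↔ _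
  simp [Subgroup.mem_iInf, MonoidHom.mem_ker]

theorem lemB (X : SGrp) : ∀ (t m k : ℕ), m + (m - k) ≤ t → k ≤ m → ∀ x : X.G m,
    X.KerLow m k x →
    ∃ (y : X.G m) (D : List (Σ q : ℕ, List ℕ × X.G q)),
      y ∈ X.NG m ∧
      (D.map (fun p => p.2.1)).Pairwise Slt ∧
      (∀ p ∈ D, SIdx m p.2.1 ∧ p.1 + p.2.1.length = m ∧ (∀ i ∈ p.2.1, k ≤ i) ∧
        p.2.2 ∈ X.NG p.1) ∧
      x = y * (D.map (X.term m)).prod := by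
  intro t
  induction t with
  | zero =>
    intro m k hle hkm x hx
    have hm : m = 0 := by omega
    subst hm
    exact ⟨x, [], by simp [SGrp.NG], by simp, by simp, by simp⟩
  | succ t ih =>
    intro m k hle hkm x hx
    by_cases hk : k = m
    · subst hk
      refine ⟨x, [], ?_, by simp, by simp, by simp⟩
      cases k with
      | zero => simp [SGrp.NG]
      | succ n => exact (X.mem_NG_succ n x).mpr (fun i hi => hx i hi)
    · have hklt : k < m := lt_of_le_of_ne hkm hk
      cases m with
      | zero => omega
      | succ n =>
        have hkn : k ≤ n := by omega
        set w : X.G n := X.d n k x with hw_def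
        set x' : X.G (n+1) := x * (X.s n k w)⁻¹ with hx'_def
        -- the small faces of `d_k x` vanish
        have hdw : ∀ i < k, ∀ (hn : n ≠ 0),
            True := fun _ _ _ => trivial
        have hw_low : X.KerLow n k w := by
          cases n with
          | zero => trivial
          | succ n' =>
            intro i hi
            show X.d n' i (X.d (n'+1) k x) = 1
            rw [X.dd n' i k hi (by omega)]
            rw [hx i (by omega)]
            exact map_one _
        have hx'_low : X.KerLow (n+1) (k+1) x' := by
          intro i hi
          show X.d n i (x * (X.s n k w)⁻¹) = 1
          rw [map_mul, map_inv]
          rcases Nat.lt_succ_iff_lt_or_eq.mp hi with hik | rfl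
          · have hn1 : 1 ≤ n := by omega
            obtain ⟨n', rfl⟩ : ∃ n', n = n' + 1 := ⟨n - 1, by omega⟩
            rw [X.ds_lt n' i k hik (by omega)]
            have : X.d n' i w = 1 := hw_low i hik
            rw [this, map_one, hx i (by omega)]
            simp
          · rw [X.ds_eq n i hkn]
            rw [hw_def]
            simp
        obtain ⟨y, D₁, hy, hD₁pw, hD₁mem, hD₁prod⟩ :=
          ih (n+1) (k+1) (by omega) (by omega) x' hx'_low
        obtain ⟨yw, D₂, hyw, hD₂pw, hD₂mem, hD₂prod⟩ :=
          ih n k (by omega) hkn w hw_low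
        set bump : (Σ q : ℕ, List ℕ × X.G q) → (Σ q : ℕ, List ℕ × X.G q) :=
          fun p => ⟨p.1, (p.2.1.map (· + 1) ++ [k], p.2.2)⟩ with hbump
        refine ⟨y, D₁ ++ ⟨n, ([k], yw)⟩ :: D₂.map bump, hy, ?_, ?_, ?_⟩
        · -- pairwise
          rw [List.map_append, List.map_cons, List.map_map]
          refine List.pairwise_append.mpr ⟨hD₁pw, ?_, ?_⟩
          · refine List.pairwise_cons.mpr ⟨?_, ?_⟩
            · intro γ hγ
              obtain ⟨p, hp, rfl⟩ := List.mem_map.mp hγ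
              exact slt_k_bump k ((hD₂mem p hp).1).1
            · have : ((fun p => p.2.1) ∘ bump) = (fun α => α.map (· + 1) ++ [k]) ∘ (fun p : (Σ q : ℕ, List ℕ × X.G q) => p.2.1) := rfl
              rw [this, ← List.map_map]
              exact List.pairwise_map.mpr (hD₂pw.imp (fun h => slt_bump k h))
          · intro α hα γ hγ
            obtain ⟨p, hp, rfl⟩ := List.mem_map.mp hα
            obtain ⟨hS, _, hge, _⟩ := hD₁mem p hp
            obtain ⟨a, ta, hta⟩ := rev_ne_nil hS.1
            have hak : k < a := by
              have : a ∈ p.2.1 := List.mem_reverse.mp (hta ▸ (List.mem_cons_self : a ∈ a :: ta))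
              have := hge a this; omega
            rcases List.mem_cons.mp hγ with rfl | hγ
            · exact slt_of_rev hta (by rfl) hak
            · obtain ⟨q, hq, rfl⟩ := List.mem_map.mp hγ
              exact slt_of_rev hta (rev_bump q.2.1 k) hak
        · -- membership facts
          intro p hp
          rcases List.mem_append.mp hp with hp | hp
          · obtain ⟨hS, hdim, hge, hNG⟩ := hD₁mem p hp
            exact ⟨hS, hdim, fun i hi => by have := hge i hi; omega, hNG⟩
          · rcases List.mem_cons.mp hp with rfl | hp
            · exact ⟨sidx_single (by omega), by simp, by simp, hyw⟩
            · obtain ⟨q, hq, rfl⟩ := List.mem_map.mp hp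
              obtain ⟨hS, hdim, hge, hNG⟩ := hD₂mem q hq
              refine ⟨sidx_bump hS hkn hge, by show q.1 + (q.2.1.map (· + 1) ++ [k]).length = n + 1; simp; omega, ?_, hNG⟩
              intro i hi
              rcases List.mem_append.mp hi with hi | hi
              · obtain ⟨a, ha, rfl⟩ := List.mem_map.mp hi
                have := hge a ha; omega
              · simp at hi; omega
        · -- the product formula
          have hx0 : x = x' * X.s n k w := (inv_mul_cancel_right x (X.s n k w)).symm
          rw [List.map_append, List.prod_append, List.map_cons, List.prod_cons]
          have hsw : X.s n k w = X.term (n+1) ⟨n, ([k], yw)⟩ *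
              ((D₂.map bump).map (X.term (n+1))).prod := by
            rw [hD₂prod, map_mul, map_list_prod, X.term_single]
            congr 1
            rw [List.map_map, List.map_map]
            refine congrArg List.prod (List.map_congr_left (fun p hp => ?_))
            obtain ⟨hS, hdim, hge, _⟩ := hD₂mem p hp
            show X.s n k (X.term n ⟨p.1, (p.2.1, p.2.2)⟩) = X.term (n+1) (bump p)
            rw [← X.term_bump n k p.1 p.2.1 p.2.2 hdim (sidx_pairwise hS)
              (fun a ha => ⟨hge a ha, (hS.2.2.2 a ha)⟩)]
          rw [hx0, hD₁prod, hsw]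
          group

/-- every `x ∈ G_n` (n = m+1 ≥ 1) can be written as
`y · ∏_{α ∈ S(n), α ≠ ∅} s_α(x_α)` with `y ∈ NG_n`, `x_α ∈ NG_{n-#α}`, the
product taken over all nonempty `α ∈ S(n)` in the lexicographic order. -/
theorem stmt1 (X : SGrp) (m : ℕ) (x : X.G (m+1)) :
    ∃ (y : X.G (m+1)) (L : List (List ℕ))
      (f : (α : List ℕ) → X.G (m+1 - α.length)),
      y ∈ X.NG (m+1) ∧
      L.Chain' Slt ∧
      (∀ α, α ∈ L ↔ SIdx (m+1) α) ∧
      (∀ α ∈ L, f α ∈ X.NG (m+1 - α.length)) ∧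
      x = y * (L.map (fun α => X.sMapN (m+1) α (f α))).prod := by
  obtain ⟨y, D, hy, hpw, hmem, hprod⟩ :=
    lemB X (m+1+(m+1)) (m+1) 0 (by omega) (by omega) x (fun i hi => absurd hi (by omega))
  have hDc : ∃ Dc : List ((α : List ℕ) × X.G (m+1 - α.length)), Dc = D.map (X.toSig (m+1)) :=
    ⟨_, rfl⟩
  obtain ⟨Dc, hDc⟩ := hDc
  have hkeys : Dc.map Sigma.fst = D.map (fun p => p.2.1) := by
    rw [hDc, List.map_map]; rfl
  have hDcNG : ∀ p ∈ Dc, p.2 ∈ X.NG (m+1 - p.1.length) := by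
    intro p hp
    rw [hDc] at hp
    obtain ⟨q, hq, rfl⟩ := List.mem_map.mp hp
    obtain ⟨_, hdim, _, hNG⟩ := hmem q hq
    show (if h : q.1 = m+1 - q.2.1.length then X.castHom h q.2.2 else 1) ∈ _
    rw [dif_pos (by omega)]
    exact X.castHom_mem_NG _ hNG
  refine ⟨y, Lfull (m+1), X.fOf (m+1) Dc, hy, (Lfull_pairwise (m+1)).isChain,
    fun α => Lfull_mem (m+1) α, fun α _ => X.fOf_mem_NG (m+1) Dc hDcNG α, ?_⟩
  have hsub : (D.map (fun p => p.2.1)).Sublist (Lfull (m+1)) := by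
    refine pw_sublist _ _ hpw (Lfull_pairwise (m+1)) (fun α hα => ?_)
    obtain ⟨q, hq, rfl⟩ := List.mem_map.mp hα
    exact (Lfull_mem (m+1) _).mpr (hmem q hq).1
  have hnd : (Lfull (m+1)).Nodup := (Lfull_pairwise (m+1)).imp (fun h => slt_ne h)
  rw [hprod]
  congr 1
  rw [prod_pad (fun α => X.sMapN (m+1) α (X.fOf (m+1) Dc α)) hsub hnd ?van]
  case van =>
    intro α _ hα
    show X.sMapN (m+1) α (X.fOf (m+1) Dc α) = 1
    rw [X.fOf_not_mem (m+1) Dc α (by rw [hkeys]; exact hα)]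
    exact X.sMapN_one (m+1) α
  rw [List.map_map]
  refine congrArg List.prod (List.map_congr_left (fun p hp => ?_))
  obtain ⟨_, hdim, _, _⟩ := hmem p hp
  have hfo : X.fOf (m+1) Dc (X.toSig (m+1) p).1 = (X.toSig (m+1) p).2 := by
    refine X.fOf_mem (m+1) Dc ?_ (X.toSig (m+1) p) ?_
    · rw [hkeys]
      exact hpw.imp (fun h => slt_ne h)
    · rw [hDc]
      exact List.mem_map.mpr ⟨p, hp, rfl⟩
  show X.term (m+1) p = X.sMapN (m+1) p.2.1 (X.fOf (m+1) Dc p.2.1)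
  rw [show X.fOf (m+1) Dc p.2.1 = (X.toSig (m+1) p).2 from hfo]
  exact (X.term_toSig (m+1) p hdim).symm
end

section
/- Let G be a simplicial group. Then G_2 is isomorphic to the iterated semidirect product (NG_2 ⋊ s_1(NG_1)) ⋊ (s_0(NG_1) ⋊ s_1 s_0(NG_0)), where NG_2 = Ker(d_0^2) ∩ Ker(d_1^2) and NG_1 = Ker(d_0^1). -/
/-!
A face `d_j` with its section `s_j` splits `G_{n+1}` as `ker d_j ⋊ s_j(G_n)`, the coordinates of
`g` being `p_j g = g (s_j d_j g)⁻¹` and `d_j g`. Splitting `G_2` along `d_0`, then `ker d_0`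
along `d_1` (which maps `ker d_0` onto `NG_1` because `d_0 d_1 = d_0 d_0`), then `G_1` along `d_0`,
and using `s_0 s_0 = s_1 s_0`, gives unique coordinates in
`NG_2 × s_1 NG_1 × s_0 NG_1 × s_1 s_0 G_0`.
The factor `NG_2 ⊔ s_1 NG_1` is `ker d_0`, hence normal, and `s_0 NG_1` is normalized by
`s_0 G_1`, which contains `s_1 s_0 G_0`.
-/

theorem MonoidHom.range_le_normalizer_map {G H : Type*} [Group G] [Group H] (f : H →* G)
    (N : Subgroup H) [N.Normal] : f.range ≤ Subgroup.normalizer (N.map f : Set G) := by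
  rw [f.range_eq_map, ← Subgroup.normalizer_eq_top (H := N)]
  exact Subgroup.le_normalizer_map f

namespace SGrp

variable (X : SGrp)

lemma d_p_eq_one {n j : ℕ} (hj : j ≤ n) (z : X.G (n + 1)) : X.d n j (X.p n j z) = 1 := by
  simp [p, X.ds_eq n j hj]

lemma mul_s_eq_iff {n j : ℕ} (hj : j ≤ n) {k : X.G (n + 1)} (hk : X.d n j k = 1)
    (y : X.G n) (g : X.G (n + 1)) :
    k * X.s n j y = g ↔ y = X.d n j g ∧ k = X.p n j g := by
  constructor
  · rintro rfl
    simp [p, hk, X.ds_eq n j hj]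
  · rintro ⟨rfl, rfl⟩
    simp [p]

instance NG_normal (n : ℕ) : (X.NG n).Normal := by
  cases n with
  | zero => exact Subgroup.normal_top
  | succ n =>
    exact Subgroup.normal_iInf_normal fun i =>
      Subgroup.normal_iInf_normal fun _ => (X.d n i).normal_ker

lemma mem_NG1 {x : X.G 1} : x ∈ X.NG 1 ↔ X.d 0 0 x = 1 := by
  simp [NG]

lemma mem_NG2 {x : X.G 2} : x ∈ X.NG 2 ↔ X.d 1 0 x = 1 ∧ X.d 1 1 x = 1 := by
  simp [NG, Nat.le_one_iff_eq_zero_or_eq_one, or_imp, forall_and]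

lemma d10_s11 (x : X.G 1) : X.d 1 0 (X.s 1 1 x) = X.s 0 0 (X.d 0 0 x) :=
  X.ds_lt 0 0 1 (by omega) (by omega) x

lemma d00_d11 (x : X.G 2) : X.d 0 0 (X.d 1 1 x) = X.d 0 0 (X.d 1 0 x) :=
  X.dd 0 0 1 (by omega) (by omega) x

lemma s10_s00 (x : X.G 0) : X.s 1 0 (X.s 0 0 x) = X.s 1 1 (X.s 0 0 x) :=
  X.ss 0 0 0 le_rfl le_rfl x

lemma d11_mem_NG1 {k : X.G 2} (hk : X.d 1 0 k = 1) : X.d 1 1 k ∈ X.NG 1 :=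
  X.mem_NG1.mpr (by rw [d00_d11, hk, map_one])

lemma p11_mem_NG2 {k : X.G 2} (hk : X.d 1 0 k = 1) : X.p 1 1 k ∈ X.NG 2 := by
  have hm := X.mem_NG1.mp (X.d11_mem_NG1 hk)
  exact X.mem_NG2.mpr ⟨by simp [p, d10_s11, hm, hk], X.d_p_eq_one le_rfl k⟩

lemma ker_d10_eq_sup : (X.d 1 0).ker = X.NG 2 ⊔ (X.NG 1).map (X.s 1 1) := by
  refine le_antisymm (fun k hk => ?_) (sup_le (fun x hx => (X.mem_NG2.mp hx).1) ?_)
  · have hk : X.d 1 0 k = 1 := hk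
    rw [← inv_mul_cancel_right k (X.s 1 1 (X.d 1 1 k))]
    exact mul_mem (Subgroup.mem_sup_left (X.p11_mem_NG2 hk))
      (Subgroup.mem_sup_right (Subgroup.mem_map_of_mem _ (X.d11_mem_NG1 hk)))
  · rintro _ ⟨m, hm, rfl⟩
    simp [d10_s11, X.mem_NG1.mp hm]

lemma mul_s11_mul_s10_mul_s11_s00_eq_iff {a : X.G 2} {m m' : X.G 1} (ha : a ∈ X.NG 2)
    (hm : m ∈ X.NG 1) (hm' : m' ∈ X.NG 1) (t : X.G 0) (g : X.G 2) :
    a * X.s 1 1 m * X.s 1 0 m' * X.s 1 1 (X.s 0 0 t) = g ↔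
      (t = X.d 0 0 (X.d 1 0 g) ∧ m' = X.p 0 0 (X.d 1 0 g)) ∧
        m = X.d 1 1 (X.p 1 0 g) ∧ a = X.p 1 1 (X.p 1 0 g) := by
  have hk : X.d 1 0 (a * X.s 1 1 m) = 1 := by
    rw [← MonoidHom.mem_ker, ker_d10_eq_sup]
    exact mul_mem (Subgroup.mem_sup_left ha)
      (Subgroup.mem_sup_right (Subgroup.mem_map_of_mem _ hm))
  rw [← X.s10_s00, mul_assoc _ (X.s 1 0 m'), ← map_mul, X.mul_s_eq_iff (Nat.zero_le _) hk,
    X.mul_s_eq_iff le_rfl (X.mem_NG1.mp hm'), X.mul_s_eq_iff le_rfl (X.mem_NG2.mp ha).2]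

theorem bijective_mul_NG2_s11_s10_s11_s00 :
    Function.Bijective (fun q : X.NG 2 × (X.NG 1).map (X.s 1 1) × (X.NG 1).map (X.s 1 0) ×
        ((X.s 1 1).comp (X.s 0 0)).range => (q.1 : X.G 2) * q.2.1 * q.2.2.1 * q.2.2.2) := by
  refine (Function.bijective_iff_existsUnique _).mpr fun g => ?_
  have hk := X.d_p_eq_one (Nat.zero_le 1) g
  have ha := X.p11_mem_NG2 hk
  have hm := X.d11_mem_NG1 hk
  have hm' := X.mem_NG1.mpr (X.d_p_eq_one le_rfl (X.d 1 0 g))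
  refine ⟨⟨⟨_, ha⟩, ⟨_, Subgroup.mem_map_of_mem _ hm⟩,
    ⟨_, Subgroup.mem_map_of_mem _ hm'⟩, ⟨_, X.d 0 0 (X.d 1 0 g), rfl⟩⟩, ?_, ?_⟩
  · exact (X.mul_s11_mul_s10_mul_s11_s00_eq_iff ha hm hm' _ g).mpr ⟨⟨rfl, rfl⟩, rfl, rfl⟩
  · rintro ⟨⟨a, ha⟩, ⟨_, m, hm, rfl⟩, ⟨_, m', hm', rfl⟩, ⟨_, t, rfl⟩⟩ h
    obtain ⟨⟨rfl, rfl⟩, rfl, rfl⟩ :=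
      (X.mul_s11_mul_s10_mul_s11_s00_eq_iff ha hm hm' t g).mp h
    rfl

lemma sup_le_range_s10 :
    (X.NG 1).map (X.s 1 0) ⊔ ((X.s 1 1).comp (X.s 0 0)).range ≤ (X.s 1 0).range := by
  refine sup_le (Subgroup.map_le_range _ _) ?_
  rintro _ ⟨t, rfl⟩
  exact ⟨X.s 0 0 t, X.s10_s00 t⟩

end SGrp

/-- `G_2 ≅ (NG_2 ⋊ s₁NG_1) ⋊ (s₀NG_1 ⋊ s₁s₀NG_0)` as an internal
iterated semidirect product: the multiplication map is bijective, `NG_2` is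
normal in `NG_2 ⊔ s₁NG_1`, `s₀NG_1` is normal in `s₀NG_1 ⊔ s₁s₀NG_0`, and
`NG_2 ⊔ s₁NG_1` is normal in `G_2`. -/
theorem stmt3 (X : SGrp) :
    let A : Subgroup (X.G 2) := X.NG 2
    let B : Subgroup (X.G 2) := (X.NG 1).map (X.s 1 1)
    let C : Subgroup (X.G 2) := (X.NG 1).map (X.s 1 0)
    let D : Subgroup (X.G 2) := ((X.s 1 1).comp (X.s 0 0)).range
    Function.Bijective
      (fun q : A × B × C × D => (q.1 : X.G 2) * q.2.1 * q.2.2.1 * q.2.2.2) ∧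
    (A.subgroupOf (A ⊔ B)).Normal ∧
    (C.subgroupOf (C ⊔ D)).Normal ∧
    (A ⊔ B).Normal := by
  intro A B C D
  refine ⟨X.bijective_mul_NG2_s11_s10_s11_s00, inferInstance, ?_, ?_⟩
  · exact Subgroup.normal_subgroupOf_of_le_normalizer
      (X.sup_le_range_s10.trans ((X.s 1 0).range_le_normalizer_map _))
  · rw [← X.ker_d10_eq_sup]
    exact (X.d 1 0).normal_ker
end

section
/- Let G be a simplicial group, n ≥ 1, and define p_j : G_n → G_n by p_j(z) = z · s_j d_j(z)^{-1} for 0 ≤ j ≤ n−1. Then for every z ∈ G_n, the composite p(z) = p_{n−1}(p_{n−2}(⋯ p_0(z)⋯)) lies in the Moore complex term NG_n = ∩_{i=0}^{n-1} Ker(d_i^n). -/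
/-! Each `p_j` kills `d_j`, and for `i < j` the simplicial identities give
`d_i ∘ p_j = p_{j-1} ∘ d_i`; since `p_{j-1}(1) = 1`, the later factors `p_j` of the
composite preserve the vanishing of the faces `d_i` already achieved. -/

namespace SGrp

variable (X : SGrp)

lemma p_one (n j : ℕ) : X.p n j 1 = 1 := by
  simp [p]

lemma d_p_self {n j : ℕ} (hj : j ≤ n) (z : X.G (n+1)) : X.d n j (X.p n j z) = 1 := by
  simp [p, X.ds_eq n j hj]

lemma d_p_of_lt {n i j : ℕ} (hij : i < j) (hj : j ≤ n + 1) (z : X.G (n+2)) :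
    X.d (n+1) i (X.p (n+1) j z) = X.p n (j-1) (X.d (n+1) i z) := by
  have hds := X.ds_lt n i j hij hj (X.d (n+1) j z)
  have hdd := X.dd n i j hij (by omega) z
  simp only [p, map_mul, map_inv, hds, hdd]

lemma d_pComp_eq_one {n j i : ℕ} (hj : j ≤ n) (hi : i ≤ j) (z : X.G (n+1)) :
    X.d n i (X.pComp n j z) = 1 := by
  induction j with
  | zero =>
    obtain rfl : i = 0 := by omega
    exact X.d_p_self (Nat.zero_le n) z
  | succ j ih =>
    obtain ⟨m, rfl⟩ : ∃ m, n = m + 1 := ⟨n - 1, by omega⟩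
    rcases hi.lt_or_eq with hlt | rfl
    · change X.d (m+1) i (X.p (m+1) (j+1) (X.pComp (m+1) j z)) = 1
      rw [X.d_p_of_lt hlt hj, ih (by omega) (by omega), p_one]
    · exact X.d_p_self hj _

end SGrp

/-- the composite `p = p_{n-1} ∘ ⋯ ∘ p_0` (here on `G (n+1)`,
with `p_j(z) = z·s_j d_j(z)⁻¹`, `0 ≤ j ≤ n`) lands in the Moore complex term
`NG_{n+1} = ⋂_{i=0}^{n} Ker d_i`. -/
theorem stmt4 (X : SGrp) (n : ℕ) (z : X.G (n+1)) :
    X.pComp n n z ∈ X.NG (n+1) := by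
  simp only [SGrp.NG, Subgroup.mem_iInf, MonoidHom.mem_ker, Finset.mem_range]
  intro i hi
  exact X.d_pComp_eq_one le_rfl (Nat.lt_succ_iff.mp hi) z
end

section
/- Let G be a simplicial group, α = (i_l,…,i_1) and β = (j_m,…,j_1) elements of S(n) with α ∩ β = ∅ and β < α (so i_1 < j_1), and let x ∈ NG_{n−#α}, y ∈ NG_{n−#β}. Set v = [s_α x, s_β y] ∈ G_n. Then for every k with 0 ≤ k ≤ i_1, one has p_k(v) = v, where p_k(z) = z·s_k d_k(z)^{-1}. -/
/-!
Every index of `β` exceeds `k`: the smallest index `j₁` of `β` is compared with the smallest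
index `i₁ ≥ k` of `α` in `β < α`, and disjointness rules out `j₁ = i₁`. Hence the simplicial
identity `d_k s_j = s_{j-1} d_k` (for `k < j`) carries `d_k` past all degeneracies of `s_β`,
ending at `d_k y = 1` since `y` is a Moore cycle (`k` is small enough because `β` has at most
`n - k` indices in `(k, n]`). So `d_k v = [d_k s_α x, 1] = 1` and `p_k v = v · (s_k 1)⁻¹ = v`.
-/

open scoped commutatorElement

lemma List.Lex.exists_lt_forall_of_pairwise {α : Type*} [LinearOrder α] {l₁ l₂ : List α}
    (h : List.Lex (· > ·) l₁ l₂) (h₁ : l₁.Pairwise (· < ·)) (hdisj : ∀ i ∈ l₂, i ∉ l₁) :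
    ∃ i ∈ l₂, ∀ j ∈ l₁, i < j := by
  cases h with
  | nil => exact ⟨_, List.mem_cons_self, by simp⟩
  | cons => exact absurd List.mem_cons_self (hdisj _ List.mem_cons_self)
  | @rel a _ b _ hab =>
    refine ⟨b, List.mem_cons_self, fun j hj => ?_⟩
    rcases List.mem_cons.mp hj with rfl | hj
    · exact hab
    · exact hab.trans (List.rel_of_pairwise_cons h₁ hj)

lemma List.Nodup.length_le_of_forall_mem_Ioc {L : List ℕ} {k n : ℕ} (hL : L.Nodup)
    (h : ∀ i ∈ L, k < i ∧ i ≤ n) : L.length ≤ n - k := by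
  classical
  rw [← List.toFinset_card_of_nodup hL, ← Nat.card_Ioc]
  exact Finset.card_le_card fun i hi => Finset.mem_Ioc.mpr (h i (List.mem_toFinset.mp hi))

namespace SGrp

variable (X : SGrp)

/-- The kernel of `d_k` on `G M`; `G 0` has no face maps, and `⊤` there is a placeholder. -/
def faceKer (k : ℕ) : (M : ℕ) → Subgroup (X.G M)
  | 0 => ⊤
  | N + 1 => (X.d N k).ker

variable {X}

lemma mem_faceKer_succ {k N : ℕ} {z : X.G (N + 1)} : z ∈ X.faceKer k (N + 1) ↔ X.d N k z = 1 :=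
  Iff.rfl

lemma NG_le_faceKer {k M : ℕ} (hk : k < M) : X.NG M ≤ X.faceKer k M := by
  obtain ⟨N, rfl⟩ : ∃ N, M = N + 1 := ⟨M - 1, by omega⟩
  intro z hz
  simp only [NG, Subgroup.mem_iInf, Finset.mem_range] at hz
  exact hz k hk

lemma castHom_mem_faceKer {k a b : ℕ} (h : a = b) {z : X.G a} (hz : z ∈ X.faceKer k a) :
    X.castHom h z ∈ X.faceKer k b := by
  subst h
  exact hz

lemma s_mem_faceKer {k i M : ℕ} (hki : k < i) (hiM : i ≤ M) {w : X.G M}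
    (hw : w ∈ X.faceKer k M) : X.s M i w ∈ X.faceKer k (M + 1) := by
  obtain ⟨N, rfl⟩ : ∃ N, M = N + 1 := ⟨M - 1, by omega⟩
  rw [mem_faceKer_succ, X.ds_lt N k i hki hiM, mem_faceKer_succ.mp hw, map_one]

lemma sComp_mem_faceKer {k m : ℕ} {L : List ℕ} (hL : L.Pairwise (· > ·))
    (hbound : ∀ i ∈ L, k < i ∧ i < m + L.length) {y : X.G m} (hy : y ∈ X.faceKer k m) :
    X.sComp m L y ∈ X.faceKer k (m + L.length) := by
  induction L with
  | nil => exact hy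
  | cons i rest ih =>
    simp only [List.length_cons] at hbound
    obtain ⟨hi_gt, hrest⟩ := List.pairwise_cons.mp hL
    have hi := hbound i List.mem_cons_self
    refine s_mem_faceKer (M := m + rest.length) hi.1 (by omega) (ih hrest fun j hj => ?_)
    have hji := hi_gt j hj
    exact ⟨(hbound j (List.mem_cons_of_mem i hj)).1, by omega⟩

lemma sMapN_mem_faceKer {k n : ℕ} {L : List ℕ} (hL : L.Pairwise (· > ·))
    (hbound : ∀ i ∈ L, k < i ∧ i < n) {y : X.G (n - L.length)}
    (hy : y ∈ X.faceKer k (n - L.length)) : X.sMapN n L y ∈ X.faceKer k n := by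
  unfold sMapN
  split_ifs with h
  · exact castHom_mem_faceKer h (sComp_mem_faceKer hL (by rwa [h]) hy)
  · exact Subgroup.one_mem _

lemma p_eq_self_of_d_eq_one {n k : ℕ} {z : X.G (n + 1)} (hz : X.d n k z = 1) :
    X.p n k z = z := by
  rw [p, hz, map_one, inv_one, mul_one]

end SGrp

theorem stmt7_general (X : SGrp) (n : ℕ) (α β : List ℕ)
    (hβ : SIdx (n+1) β)
    (hdisj : ∀ i ∈ α, i ∉ β) (hlt : Slt β α)
    (x : X.G (n+1 - α.length)) (y : X.G (n+1 - β.length))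
    (hy : y ∈ X.NG (n+1 - β.length))
    (k : ℕ) (hk : ∀ i ∈ α, k ≤ i) :
    X.p n k ⁅X.sMapN (n+1) α x, X.sMapN (n+1) β y⁆ =
      ⁅X.sMapN (n+1) α x, X.sMapN (n+1) β y⁆ := by
  obtain ⟨hne, hchain, -, hβn⟩ := hβ
  have hdec : β.Pairwise (· > ·) := List.isChain_iff_pairwise.mp hchain
  obtain ⟨i, hiα, hi⟩ := hlt.exists_lt_forall_of_pairwise (List.pairwise_reverse.mpr hdec)
    (by simpa using hdisj)
  have hkβ : ∀ j ∈ β, k < j := fun j hj =>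
    (hk i (List.mem_reverse.mp hiα)).trans_lt (hi j (List.mem_reverse.mpr hj))
  have hlen : k < n + 1 - β.length := by
    have hcount := hdec.nodup.length_le_of_forall_mem_Ioc fun j hj =>
      ⟨hkβ j hj, Nat.le_of_lt_succ (hβn j hj)⟩
    have hpos := List.length_pos_iff.mpr hne
    omega
  have hB : X.d n k (X.sMapN (n+1) β y) = 1 :=
    SGrp.mem_faceKer_succ.mp <| SGrp.sMapN_mem_faceKer hdec (fun j hj => ⟨hkβ j hj, hβn j hj⟩)
      (SGrp.NG_le_faceKer hlen hy)
  refine SGrp.p_eq_self_of_d_eq_one ?_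
  rw [map_commutatorElement, hB, commutatorElement_one_right]

/-- Lemma 3.1(i). For disjoint `α, β ∈ S(n)` with `β < α`,
`x ∈ NG_{n-#α}`, `y ∈ NG_{n-#β}`, `v = [s_α x, s_β y]`, and any `k ≤ i₁`
(i.e. `k` at most every index of `α`, `i₁` being the smallest), `p_k(v) = v`.
(Stated at level `n+1` so that the `p_k` are defined.) -/
theorem stmt7 (X : SGrp) (n : ℕ) (α β : List ℕ)
    (hα : SIdx (n+1) α) (hβ : SIdx (n+1) β)
    (hdisj : ∀ i ∈ α, i ∉ β) (hlt : Slt β α)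
    (x : X.G (n+1 - α.length)) (y : X.G (n+1 - β.length))
    (hx : x ∈ X.NG (n+1 - α.length)) (hy : y ∈ X.NG (n+1 - β.length))
    (k : ℕ) (hk : ∀ i ∈ α, k ≤ i) :
    X.p n k ⁅X.sMapN (n+1) α x, X.sMapN (n+1) β y⁆ =
      ⁅X.sMapN (n+1) α x, X.sMapN (n+1) β y⁆ :=
  stmt7_general X n α β hβ hdisj hlt x y hy k hk
end

section
/- Let G be a simplicial group and x ∈ NG_1 a Moore cycle, i.e. d_1(x) = 1 (and d_0(x) = 1). Then F_{(0)(1)}(x,x) = [s_0 x, s_1 x]·[s_1 x, s_1 x] = [s_0 x, s_1 x] is a Moore cycle in NG_2, i.e. d_0, d_1 and d_2 all kill [s_0 x, s_1 x]. -/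
open scoped commutatorElement

/-! Each face sends one of `s₀x`, `s₁x` to `1` or both to the same element: `d₀s₁x = s₀d₀x = 1`,
`d₂s₀x = s₀d₁x = 1` and `d₁s₀x = x = d₁s₁x`. In each case the image of the commutator is trivial. -/

namespace SGrp

variable (X : SGrp)

theorem d_s_eq_one_of_lt {n i j : ℕ} (hij : i < j) (hj : j ≤ n + 1) {x : X.G (n + 1)}
    (hx : X.d n i x = 1) : X.d (n + 1) i (X.s (n + 1) j x) = 1 := by
  rw [X.ds_lt n i j hij hj, hx, map_one]

theorem d_s_eq_one_of_gt {n i j : ℕ} (hij : j + 1 < i) (hi : i ≤ n + 2) {x : X.G (n + 1)}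
    (hx : X.d n (i - 1) x = 1) : X.d (n + 1) i (X.s (n + 1) j x) = 1 := by
  rw [X.ds_gt n i j hij hi, hx, map_one]

end SGrp

/-- if `x ∈ NG_1` is a Moore cycle (`d₀x = d₁x = 1`), then
`F_{(0)(1)}(x,x) = [s₀x, s₁x]·[s₁x, s₁x] = [s₀x, s₁x]` is a Moore cycle in
`NG_2`: `d₀, d₁, d₂` all kill it. -/
theorem stmt12 (X : SGrp) (x : X.G 1)
    (hx0 : X.d 0 0 x = 1) (hx1 : X.d 0 1 x = 1) :
    let F : X.G 2 := ⁅X.s 1 0 x, X.s 1 1 x⁆ * ⁅X.s 1 1 x, X.s 1 1 x⁆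
    F = ⁅X.s 1 0 x, X.s 1 1 x⁆ ∧
    X.d 1 0 F = 1 ∧ X.d 1 1 F = 1 ∧ X.d 1 2 F = 1 := by
  intro F
  have hF : F = ⁅X.s 1 0 x, X.s 1 1 x⁆ := by
    simp only [F, commutatorElement_self, mul_one]
  refine ⟨hF, ?_, ?_, ?_⟩ <;> rw [hF, map_commutatorElement]
  · rw [X.d_s_eq_one_of_lt zero_lt_one le_rfl hx0, commutatorElement_one_right]
  · rw [X.ds_succ 1 0 zero_le_one, X.ds_eq 1 1 le_rfl, commutatorElement_self]
  · rw [X.d_s_eq_one_of_gt one_lt_two le_rfl hx1, commutatorElement_one_left]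
end

section
/- Let G be a simplicial group and x, y ∈ NG_2. Then the element F_{(0)(2)}(x,y) = [s_0 x, s_2 y] lies in NG_3 = ∩_{i=0}^{2} Ker(d_i^3). -/
open scoped commutatorElement

namespace SGrp

variable (X : SGrp)

theorem mem_NG_succ_iff {n : ℕ} {z : X.G (n + 1)} :
    z ∈ X.NG (n + 1) ↔ ∀ i < n + 1, X.d n i z = 1 := by
  simp only [NG, Subgroup.mem_iInf, MonoidHom.mem_ker, Finset.mem_range]

end SGrp

theorem MonoidHom.map_commutatorElement_eq_one_of_left {G H : Type*} [Group G] [Group H]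
    (f : G →* H) {a : G} (b : G) (ha : f a = 1) : f ⁅a, b⁆ = 1 := by
  rw [map_commutatorElement, ha, commutatorElement_one_left]

theorem MonoidHom.map_commutatorElement_eq_one_of_right {G H : Type*} [Group G] [Group H]
    (f : G →* H) (a : G) {b : G} (hb : f b = 1) : f ⁅a, b⁆ = 1 := by
  rw [map_commutatorElement, hb, commutatorElement_one_right]

/-- for `x, y ∈ NG_2`, `F_{(0)(2)}(x,y) = [s₀x, s₂y] ∈ NG_3`. -/
theorem stmt13 (X : SGrp) (x y : X.G 2)
    (hx : x ∈ X.NG 2) (hy : y ∈ X.NG 2) :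
    ⁅X.s 2 0 x, X.s 2 2 y⁆ ∈ X.NG 3 := by
  rw [X.mem_NG_succ_iff] at hx hy ⊢
  intro i hi
  interval_cases i
  · refine (X.d 2 0).map_commutatorElement_eq_one_of_right _ ?_
    rw [X.ds_lt 1 0 2 (by norm_num) (by norm_num), hy 0 (by norm_num), map_one]
  · refine (X.d 2 1).map_commutatorElement_eq_one_of_right _ ?_
    rw [X.ds_lt 1 1 2 (by norm_num) (by norm_num), hy 1 (by norm_num), map_one]
  · refine (X.d 2 2).map_commutatorElement_eq_one_of_left _ ?_
    rw [X.ds_gt 1 2 0 (by norm_num) (by norm_num), hx 1 (by norm_num), map_one]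
end

section
/- Let G be a simplicial group and x, y ∈ NG_2. Then the element F_{(1)(2)}(x,y) = [s_1 x, s_2 y]·[s_2 y, s_2 x] lies in NG_3, and d_3(F_{(1)(2)}(x,y)) = [s_1 d_2 x, y]·[y, x] ∈ NG_2. -/
open scoped commutatorElement

/-- for `x, y ∈ NG_2`, `F_{(1)(2)}(x,y) = [s₁x, s₂y]·[s₂y, s₂x]`
lies in `NG_3` and `d₃(F_{(1)(2)}(x,y)) = [s₁d₂x, y]·[y, x] ∈ NG_2`. -/
theorem stmt14 (X : SGrp) (x y : X.G 2)
    (hx : x ∈ X.NG 2) (hy : y ∈ X.NG 2) :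
    let F : X.G 3 := ⁅X.s 2 1 x, X.s 2 2 y⁆ * ⁅X.s 2 2 y, X.s 2 2 x⁆
    F ∈ X.NG 3 ∧
    X.d 2 3 F = ⁅X.s 1 1 (X.d 1 2 x), y⁆ * ⁅y, x⁆ ∧
    X.d 2 3 F ∈ X.NG 2 := by
  intro F
  simp only [SGrp.NG, Subgroup.mem_iInf, MonoidHom.mem_ker, Finset.mem_range] at hx hy ⊢
  have hx0 : X.d 1 0 x = 1 := hx 0 (by norm_num)
  have hx1 : X.d 1 1 x = 1 := hx 1 (by norm_num)
  have hy0 : X.d 1 0 y = 1 := hy 0 (by norm_num)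
  have hy1 : X.d 1 1 y = 1 := hy 1 (by norm_num)
  -- face computations on degeneracies
  have e01 : X.d 2 0 (X.s 2 1 x) = 1 := by
    rw [X.ds_lt 1 0 1 (by norm_num) (by norm_num), hx0, map_one]
  have e02y : X.d 2 0 (X.s 2 2 y) = 1 := by
    rw [X.ds_lt 1 0 2 (by norm_num) (by norm_num), hy0, map_one]
  have e02x : X.d 2 0 (X.s 2 2 x) = 1 := by
    rw [X.ds_lt 1 0 2 (by norm_num) (by norm_num), hx0, map_one]
  have e11 : X.d 2 1 (X.s 2 1 x) = x := X.ds_eq 2 1 (by norm_num) x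
  have e12y : X.d 2 1 (X.s 2 2 y) = 1 := by
    rw [X.ds_lt 1 1 2 (by norm_num) (by norm_num), hy1, map_one]
  have e12x : X.d 2 1 (X.s 2 2 x) = 1 := by
    rw [X.ds_lt 1 1 2 (by norm_num) (by norm_num), hx1, map_one]
  have e21 : X.d 2 2 (X.s 2 1 x) = x := X.ds_succ 2 1 (by norm_num) x
  have e22y : X.d 2 2 (X.s 2 2 y) = y := X.ds_eq 2 2 (by norm_num) y
  have e22x : X.d 2 2 (X.s 2 2 x) = x := X.ds_eq 2 2 (by norm_num) x
  have e31 : X.d 2 3 (X.s 2 1 x) = X.s 1 1 (X.d 1 2 x) :=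
    X.ds_gt 1 3 1 (by norm_num) (by norm_num) x
  have e32y : X.d 2 3 (X.s 2 2 y) = y := X.ds_succ 2 2 (by norm_num) y
  have e32x : X.d 2 3 (X.s 2 2 x) = x := X.ds_succ 2 2 (by norm_num) x
  have hd3 : X.d 2 3 F = ⁅X.s 1 1 (X.d 1 2 x), y⁆ * ⁅y, x⁆ := by
    simp only [F, map_mul, map_commutatorElement, e31, e32y, e32x]
  refine ⟨?_, hd3, ?_⟩
  · intro i hi
    interval_cases i
    · simp [F, commutatorElement_def, map_mul, map_inv, e01, e02y, e02x]
    · simp [F, commutatorElement_def, map_mul, map_inv, e11, e12y, e12x]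
    · simp only [F, commutatorElement_def, map_mul, map_inv, e21, e22y, e22x]
      group
  · have hdd : X.d 0 0 (X.d 1 2 x) = 1 := by
      rw [X.dd 0 0 2 (by norm_num) (by norm_num), hx0, map_one]
    have f0 : X.d 1 0 (X.s 1 1 (X.d 1 2 x)) = 1 := by
      rw [X.ds_lt 0 0 1 (by norm_num) (by norm_num), hdd, map_one]
    have f1 : X.d 1 1 (X.s 1 1 (X.d 1 2 x)) = X.d 1 2 x :=
      X.ds_eq 1 1 (by norm_num) _
    intro i hi
    rw [hd3]
    interval_cases i
    · simp [commutatorElement_def, map_mul, map_inv, f0, hx0, hy0]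
    · simp [commutatorElement_def, map_mul, map_inv, f1, hx1, hy1]
end

section
/- Let G be a simplicial group, α = (i_l,…,i_1), β = (j_m,…,j_1) ∈ S(n) with α ∩ β = ∅ and β < α, x ∈ NG_{n−#α}, y ∈ NG_{n−#β}, and v = [s_α x, s_β y]. Then for each l ∈ [n−1], there exist elements z_i ∈ ∩_{j=0}^{i-1} Ker(d_j) ⊆ G_{n-1} (for 1 ≤ i ≤ l) such that p_l p_{l-1} ⋯ p_1(v) = v · ∏_{i=1}^{l} s_i(z_i)^{-1}, where p_j(w) = w·s_j d_j(w)^{-1}. -/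
/-!
Only `d₀ v = 1` matters. One of `α, β`, say `γ`, avoids `0`, and the identity
`d₀ s_i = s_{i-1} d₀` (for `i ≥ 1`) carries `d₀ x = 1` up to `d₀ s_γ x = 1`, so
`d₀ v` is a commutator with a trivial entry. For any `v` with `d₀ v = 1`, each `p_k`
kills the faces `d₀, …, d_k` of its argument `w` (given it kills `d₀, …, d_{k-1}`),
and contributes the factor `s_k(d_k w)⁻¹`, whose `d_j`-face for `j < k` is
`d_{k-1} d_j w = 1`.
-/

namespace SGrp

variable (X : SGrp)

def kerFaceZero : (k : ℕ) → Subgroup (X.G k)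
  | 0 => ⊤
  | k + 1 => (X.d k 0).ker

theorem NG_le_kerFaceZero : ∀ k, X.NG k ≤ X.kerFaceZero k
  | 0 => le_rfl
  | k + 1 => fun _ hx => by
    simp only [NG, Subgroup.mem_iInf, Finset.mem_range] at hx
    exact hx 0 k.succ_pos

theorem castHom_mem_kerFaceZero {a b : ℕ} (h : a = b) {z : X.G a}
    (hz : z ∈ X.kerFaceZero a) : X.castHom h z ∈ X.kerFaceZero b := by
  subst h; exact hz

theorem s_mem_kerFaceZero {a i : ℕ} (hi : 0 < i) (hia : i ≤ a) {w : X.G a}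
    (hw : w ∈ X.kerFaceZero a) : X.s a i w ∈ X.kerFaceZero (a + 1) := by
  obtain ⟨b, rfl⟩ : ∃ b, a = b + 1 := ⟨a - 1, by omega⟩
  change X.d (b + 1) 0 (X.s (b + 1) i w) = 1
  rw [X.ds_lt b 0 i hi hia, show X.d b 0 w = 1 from hw, map_one]

theorem sComp_mem_kerFaceZero (m : ℕ) {α : List ℕ} (hα : α.Pairwise (· > ·))
    (hbd : ∀ i ∈ α, 0 < i ∧ i < m + α.length) {x : X.G m}
    (hx : x ∈ X.kerFaceZero m) : X.sComp m α x ∈ X.kerFaceZero (m + α.length) := by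
  induction α with
  | nil => exact hx
  | cons i rest ih =>
    obtain ⟨hlt, hrest⟩ := List.pairwise_cons.mp hα
    obtain ⟨hi, hin⟩ := hbd i List.mem_cons_self
    have hin' : i ≤ m + rest.length := by simpa using Nat.lt_succ_iff.mp hin
    refine X.s_mem_kerFaceZero hi hin' (ih hrest fun e he => ⟨?_, (hlt e he).trans_le hin'⟩)
    exact (hbd e (List.mem_cons_of_mem i he)).1

theorem sMapN_mem_kerFaceZero {N : ℕ} {α : List ℕ} (hα : α.Pairwise (· > ·))
    (hbd : ∀ i ∈ α, 0 < i ∧ i < N) {x : X.G (N - α.length)}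
    (hx : x ∈ X.NG (N - α.length)) : X.sMapN N α x ∈ X.kerFaceZero N := by
  unfold sMapN
  split_ifs with h
  · refine X.castHom_mem_kerFaceZero h (X.sComp_mem_kerFaceZero _ hα (by rwa [h]) ?_)
    exact X.NG_le_kerFaceZero _ hx
  · exact one_mem _

theorem sMapN_mem_kerFaceZero_of_zero_notMem {N : ℕ} {γ : List ℕ} (hγ : SIdx N γ)
    (h0 : 0 ∉ γ) {w : X.G (N - γ.length)} (hw : w ∈ X.NG (N - γ.length)) :
    X.sMapN N γ w ∈ X.kerFaceZero N :=
  X.sMapN_mem_kerFaceZero (List.isChain_iff_pairwise.mp hγ.2.1)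
    (fun i hi => ⟨Nat.pos_of_ne_zero (by rintro rfl; exact h0 hi), hγ.2.2.2 i hi⟩) hw

theorem d_d_eq_one_of_lt {n j k : ℕ} (hjk : j < k) (hk : k ≤ n + 1) {w : X.G (n + 2)}
    (hw : X.d (n + 1) j w = 1) : X.d n j (X.d (n + 1) k w) = 1 := by
  rw [X.dd n j k hjk (by omega), hw, map_one]

theorem d_p_eq_one_s16 {n k : ℕ} (hk : k ≤ n + 1) {w : X.G (n + 2)}
    (hw : ∀ j < k, X.d (n + 1) j w = 1) : ∀ j ≤ k, X.d (n + 1) j (X.p (n + 1) k w) = 1 := by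
  intro j hj
  rw [p, map_mul, map_inv]
  rcases hj.lt_or_eq with hj | rfl
  · rw [X.ds_lt n j k hj hk, X.d_d_eq_one_of_lt hj hk (hw j hj), hw j hj, map_one, inv_one,
      mul_one]
  · rw [X.ds_eq (n + 1) j hk, mul_inv_cancel]

theorem d_pComp1_eq_one {n : ℕ} {v : X.G (n + 2)} (hv : X.d (n + 1) 0 v = 1) :
    ∀ l ≤ n + 1, ∀ j ≤ l, X.d (n + 1) j (X.pComp1 (n + 1) l v) = 1
  | 0, _, j, hj => by rwa [Nat.le_zero.mp hj]
  | l + 1, hl, j, hj =>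
    X.d_p_eq_one_s16 hl (fun j hj => d_pComp1_eq_one hv l (by omega) j (by omega)) j hj

theorem pComp1_eq_mul_prod (n : ℕ) (v : X.G (n + 2)) (l : ℕ) :
    X.pComp1 (n + 1) l v = v * ((List.range l).map fun i =>
      (X.s (n + 1) (i + 1) (X.d (n + 1) (i + 1) (X.pComp1 (n + 1) i v)))⁻¹).prod := by
  induction l with
  | zero => simp [pComp1]
  | succ l ih =>
    rw [List.range_succ, List.map_append, List.prod_append, ← mul_assoc, ← ih]
    simp [pComp1, p]

end SGrp

open scoped commutatorElement

theorem stmt16_general (X : SGrp) (n : ℕ) (α β : List ℕ)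
    (hα : SIdx (n+2) α) (hβ : SIdx (n+2) β)
    (hdisj : ∀ i ∈ α, i ∉ β)
    (x : X.G (n+2 - α.length)) (y : X.G (n+2 - β.length))
    (hx : x ∈ X.NG (n+2 - α.length)) (hy : y ∈ X.NG (n+2 - β.length))
    (l : ℕ) (hl : l ≤ n + 1) :
    ∃ z : ℕ → X.G (n+1),
      (∀ i, 1 ≤ i → i ≤ l → ∀ j < i, X.d n j (z i) = 1) ∧
      X.pComp1 (n+1) l ⁅X.sMapN (n+2) α x, X.sMapN (n+2) β y⁆ =
        ⁅X.sMapN (n+2) α x, X.sMapN (n+2) β y⁆ *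
          ((List.range l).map (fun i => (X.s (n+1) (i+1) (z (i+1)))⁻¹)).prod := by
  set v := ⁅X.sMapN (n+2) α x, X.sMapN (n+2) β y⁆
  have hv : X.d (n+1) 0 v = 1 := by
    rw [map_commutatorElement]
    by_cases h0 : 0 ∈ α
    · rw [(X.sMapN_mem_kerFaceZero_of_zero_notMem hβ (hdisj 0 h0) hy : _ = _),
        commutatorElement_one_right]
    · rw [(X.sMapN_mem_kerFaceZero_of_zero_notMem hα h0 hx : _ = _), commutatorElement_one_left]
  refine ⟨fun i => X.d (n+1) i (X.pComp1 (n+1) (i-1) v), fun i _ hil j hj => ?_,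
    X.pComp1_eq_mul_prod n v l⟩
  exact X.d_d_eq_one_of_lt hj (by omega) (X.d_pComp1_eq_one hv (i-1) (by omega) j (by omega))

/-- Lemma 3.2. For disjoint `α, β ∈ S(n)` with `β < α` and
`v = [s_α x, s_β y]`, for each `l ∈ [n-1]` there are `z_i ∈ ⋂_{j<i} Ker d_j`
(in the next dimension down) with `p_l ⋯ p_1(v) = v · ∏_{i=1}^{l} s_i(z_i)⁻¹`.
(Stated at level `n+2` so both `p` and the lower faces are available.) -/
theorem stmt16 (X : SGrp) (n : ℕ) (α β : List ℕ)
    (hα : SIdx (n+2) α) (hβ : SIdx (n+2) β)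
    (hdisj : ∀ i ∈ α, i ∉ β) (hlt : Slt β α)
    (x : X.G (n+2 - α.length)) (y : X.G (n+2 - β.length))
    (hx : x ∈ X.NG (n+2 - α.length)) (hy : y ∈ X.NG (n+2 - β.length))
    (l : ℕ) (hl : l ≤ n + 1) :
    ∃ z : ℕ → X.G (n+1),
      (∀ i, 1 ≤ i → i ≤ l → ∀ j < i, X.d n j (z i) = 1) ∧
      X.pComp1 (n+1) l ⁅X.sMapN (n+2) α x, X.sMapN (n+2) β y⁆ =
        ⁅X.sMapN (n+2) α x, X.sMapN (n+2) β y⁆ *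
          ((List.range l).map (fun i => (X.s (n+1) (i+1) (z (i+1)))⁻¹)).prod :=
  stmt16_general X n α β hα hβ hdisj x y hx hy l hl
end
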